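/- Let E be a Polish space, let (μ_ε)_{ε>0} be a family of Borel probability measures on E, and let I be a rate function on E. Then the Laplace principle lower bound holds with rate function I — i.e., for every bounded continuous h : E → ℝ, liminf_{ε→0⁺} ε·log ∫_E exp(−h(x)/ε) μ_ε(dx) ≥ −inf_{x∈E}{h(x)+I(x)} — if and only if the large deviation lower bound holds with rate function I, i.e., for every open set U ⊆ E, liminf_{ε→0⁺} ε·log μ_ε(U) ≥ −inf_{x∈U} I(x). -/

import Mathlib

open MeasureTheory Filter Set Topology
open scoped ENNReal

/-!
Both directions compare `ε log ∫ exp (-h/ε) dμ_ε` with `ε log μ_ε(U)` up to errors that vanish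
as `ε → 0`. If `h < c` on an open `U`, then `∫ exp (-h/ε) dμ_ε ≥ exp (-c/ε) μ_ε(U)`; letting `c`
decrease to `h x₀` for `x₀` in the open set `{h < c}` turns the large deviation lower bound into the
Laplace lower bound. Conversely, for `x₀ ∈ U` take a continuous `h` with `h x₀ = 0`, `0 ≤ h ≤ M`
and `h = M` off `U`, where `M > I x₀`. Then `∫ exp (-h/ε) dμ_ε ≤ 2 max (μ_ε(U), exp (-M/ε))`, so
the Laplace lower bound gives `-I x₀ ≤ max (liminf ε log μ_ε(U), -M)`, and the choice of `M` rules
out the second alternative.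
-/

lemma exists_continuous_eq_zero_eqOn_compl {X : Type*} [TopologicalSpace X]
    [CompletelyRegularSpace X] {U : Set X} (hU : IsOpen U) {x₀ : X} (hx₀ : x₀ ∈ U) {M : ℝ}
    (hM : 0 ≤ M) :
    ∃ g : X → ℝ, Continuous g ∧ g x₀ = 0 ∧ (∀ x, g x ∈ Icc 0 M) ∧ EqOn g (fun _ => M) Uᶜ := by
  obtain ⟨f, hf, hfx₀, hfU⟩ := completelyRegularSpace_iff_isOpen.1 ‹_› x₀ U hU hx₀
  refine ⟨fun x => M * f x, continuous_const.mul (continuous_subtype_val.comp hf), by simp [hfx₀],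
    fun x => ⟨mul_nonneg hM (f x).2.1, mul_le_of_le_one_right hM (f x).2.2⟩, fun x hx => ?_⟩
  simp [hfU hx]

/-- `ε log ∫ exp (-h/ε) dν`, with the lower Lebesgue integral so that it is meaningful in `EReal`
without integrability assumptions. -/
noncomputable def logLaplace {E : Type*} [MeasurableSpace E] (ν : Measure E) (h : E → ℝ) (ε : ℝ) :
    EReal :=
  (ε : EReal) * ENNReal.log (∫⁻ x, ENNReal.ofReal (Real.exp (-h x / ε)) ∂ν)

section LogLaplace

variable {E : Type*} [MeasurableSpace E] {ν : Measure E} {μ : ℝ → Measure E} {h : E → ℝ} {ε : ℝ}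

lemma integrable_exp_neg_div [IsFiniteMeasure ν] (hh : Measurable h) {C : ℝ} (hC : ∀ x, -C ≤ h x)
    (hε : 0 ≤ ε) : Integrable (fun x => Real.exp (-h x / ε)) ν := by
  refine .of_bound (hh.neg.div_const ε).exp.aestronglyMeasurable (Real.exp (C / ε))
    (.of_forall fun x => ?_)
  rw [Real.norm_of_nonneg (Real.exp_pos _).le, Real.exp_le_exp]
  exact div_le_div_of_nonneg_right (by linarith [hC x]) hε

lemma coe_mul_log_integral_eq_logLaplace [NeZero ν]
    (hint : Integrable (fun x => Real.exp (-h x / ε)) ν) :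
    ((ε * Real.log (∫ x, Real.exp (-h x / ε) ∂ν) : ℝ) : EReal) = logLaplace ν h ε := by
  rw [logLaplace,
    ← ofReal_integral_eq_lintegral_ofReal hint (.of_forall fun _ => (Real.exp_pos _).le),
    ENNReal.log_ofReal_of_pos (integral_exp_pos hint), EReal.coe_mul]

lemma coe_mul_log_ofReal_exp_div (hε : 0 < ε) (a : ℝ) :
    (ε : EReal) * ENNReal.log (ENNReal.ofReal (Real.exp (a / ε))) = a := by
  rw [ENNReal.log_ofReal_of_pos (Real.exp_pos _), Real.log_exp, ← EReal.coe_mul,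
    mul_div_cancel₀ a hε.ne']

lemma neg_add_mul_log_le_logLaplace (hε : 0 < ε) {U : Set E} (hU : MeasurableSet U) {c : ℝ}
    (hc : ∀ x ∈ U, h x ≤ c) :
    ((-c : ℝ) : EReal) + ε * ENNReal.log (ν U) ≤ logLaplace ν h ε := by
  have hmass : ENNReal.ofReal (Real.exp (-c / ε)) * ν U ≤
      ∫⁻ x, ENNReal.ofReal (Real.exp (-h x / ε)) ∂ν :=
    calc _ = ∫⁻ _ in U, ENNReal.ofReal (Real.exp (-c / ε)) ∂ν := (setLIntegral_const U _).symm
      _ ≤ ∫⁻ x in U, ENNReal.ofReal (Real.exp (-h x / ε)) ∂ν :=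
        setLIntegral_mono' hU fun x hx => by gcongr; exact hc x hx
      _ ≤ _ := setLIntegral_le_lintegral U _
  calc ((-c : ℝ) : EReal) + ε * ENNReal.log (ν U)
      = ε * (ENNReal.log (ENNReal.ofReal (Real.exp (-c / ε))) + ENNReal.log (ν U)) := by
        rw [EReal.left_distrib_of_nonneg_of_ne_top (EReal.coe_nonneg.2 hε.le) (EReal.coe_ne_top ε),
          coe_mul_log_ofReal_exp_div hε]
    _ ≤ logLaplace ν h ε := by
        rw [logLaplace, ← ENNReal.log_mul_add]
        gcongr

lemma logLaplace_le_max [IsProbabilityMeasure ν] (hε : 0 < ε) {U : Set E} (hU : MeasurableSet U)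
    (h0 : ∀ x ∈ U, 0 ≤ h x) {M : ℝ} (hM : ∀ x ∉ U, M ≤ h x) :
    logLaplace ν h ε ≤ ((ε * Real.log 2 : ℝ) : EReal) + max (ε * ENNReal.log (ν U)) (-M : ℝ) := by
  have hmass : ∫⁻ x, ENNReal.ofReal (Real.exp (-h x / ε)) ∂ν ≤
      2 * max (ν U) (ENNReal.ofReal (Real.exp (-M / ε))) :=
    calc _ ≤ ∫⁻ x, U.indicator 1 x + ENNReal.ofReal (Real.exp (-M / ε)) ∂ν := by
          refine lintegral_mono fun x => ?_
          by_cases hx : x ∈ U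
          · refine le_add_right ?_
            rw [indicator_of_mem hx, Pi.one_apply, ENNReal.ofReal_le_one, Real.exp_le_one_iff]
            exact div_nonpos_of_nonpos_of_nonneg (neg_nonpos.2 (h0 x hx)) hε.le
          · refine le_add_left ?_
            gcongr
            exact hM x hx
      _ = ν U + ENNReal.ofReal (Real.exp (-M / ε)) := by
          rw [lintegral_add_right _ measurable_const, lintegral_indicator_one hU, lintegral_const,
            measure_univ, mul_one]
      _ ≤ _ := by
          rw [two_mul]
          exact add_le_add (le_max_left _ _) (le_max_right _ _)
  have hε' : (0 : EReal) ≤ ε := EReal.coe_nonneg.2 hε.le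
  calc logLaplace ν h ε
      ≤ ε * ENNReal.log (2 * max (ν U) (ENNReal.ofReal (Real.exp (-M / ε)))) := by
        rw [logLaplace]; gcongr
    _ = _ := by
        rw [ENNReal.log_mul_add, EReal.left_distrib_of_nonneg_of_ne_top hε' (EReal.coe_ne_top ε),
          ENNReal.log_monotone.map_max, (monotone_mul_left_of_nonneg hε').map_max,
          coe_mul_log_ofReal_exp_div hε, ← ENNReal.ofReal_ofNat 2,
          ENNReal.log_ofReal_of_pos two_pos, EReal.coe_mul]

lemma liminf_logLaplace_le_max (hμ : ∀ ε : ℝ, 0 < ε → IsProbabilityMeasure (μ ε))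
    {U : Set E} (hU : MeasurableSet U) (h0 : ∀ x ∈ U, 0 ≤ h x) {M : ℝ} (hM : ∀ x ∉ U, M ≤ h x) :
    liminf (fun ε => logLaplace (μ ε) h ε) (𝓝[>] 0) ≤
      max (liminf (fun ε : ℝ => (ε : EReal) * ENNReal.log (μ ε U)) (𝓝[>] 0)) (-M : ℝ) := by
  have hlog2 : Tendsto (fun ε : ℝ => ((ε * Real.log 2 : ℝ) : EReal)) (𝓝[>] 0) (𝓝 0) := by
    have : Tendsto (fun ε : ℝ => ε * Real.log 2) (𝓝[>] 0) (𝓝 0) := by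
      simpa using ((continuous_mul_const (Real.log 2)).tendsto 0).mono_left nhdsWithin_le_nhds
    exact_mod_cast (continuous_coe_real_ereal.tendsto 0).comp this
  have hmax : Monotone fun y : EReal => max y (-M : ℝ) := fun _ _ hab => max_le_max hab le_rfl
  calc liminf (fun ε => logLaplace (μ ε) h ε) (𝓝[>] 0)
      ≤ liminf ((fun ε : ℝ => ((ε * Real.log 2 : ℝ) : EReal)) +
          fun ε : ℝ => max ((ε : EReal) * ENNReal.log (μ ε U)) (-M : ℝ)) (𝓝[>] 0) := by
        refine liminf_le_liminf (eventually_nhdsWithin_of_forall fun ε hε => ?_)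
        have := hμ ε hε
        exact logLaplace_le_max hε hU h0 hM
    _ ≤ limsup (fun ε : ℝ => ((ε * Real.log 2 : ℝ) : EReal)) (𝓝[>] 0) +
          liminf (fun ε : ℝ => max ((ε : EReal) * ENNReal.log (μ ε U)) (-M : ℝ)) (𝓝[>] 0) :=
        EReal.liminf_add_le (.inl (hlog2.limsup_eq ▸ EReal.zero_ne_bot))
          (.inl (hlog2.limsup_eq ▸ EReal.zero_ne_top))
    _ = _ := by
        rw [hlog2.limsup_eq, zero_add]
        exact (hmax.map_liminf_of_continuousAt _
          (continuous_id.max continuous_const).continuousAt).symm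

lemma neg_add_liminf_le_liminf_logLaplace {U : Set E} (hU : MeasurableSet U) {c : ℝ}
    (hc : ∀ x ∈ U, h x ≤ c) :
    ((-c : ℝ) : EReal) + liminf (fun ε : ℝ => (ε : EReal) * ENNReal.log (μ ε U)) (𝓝[>] 0) ≤
      liminf (fun ε => logLaplace (μ ε) h ε) (𝓝[>] 0) :=
  calc ((-c : ℝ) : EReal) + liminf (fun ε : ℝ => (ε : EReal) * ENNReal.log (μ ε U)) (𝓝[>] 0)
      = liminf (fun _ => ((-c : ℝ) : EReal)) (𝓝[>] (0 : ℝ)) +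
          liminf (fun ε : ℝ => (ε : EReal) * ENNReal.log (μ ε U)) (𝓝[>] 0) := by
        rw [liminf_const]
    _ ≤ _ := EReal.le_liminf_add.trans <| liminf_le_liminf <|
        eventually_nhdsWithin_of_forall fun ε hε => neg_add_mul_log_le_logLaplace hε hU hc

variable [TopologicalSpace E] [OpensMeasurableSpace E]

lemma neg_le_liminf_mul_log_measure_of_forall_continuous [CompletelyRegularSpace E]
    (hμ : ∀ ε : ℝ, 0 < ε → IsProbabilityMeasure (μ ε)) {U : Set E} (hU : IsOpen U) {x₀ : E}
    (hx₀ : x₀ ∈ U) {a : EReal}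
    (hLP : ∀ h : E → ℝ, Continuous h → (∃ C : ℝ, ∀ x, |h x| ≤ C) → h x₀ = 0 →
      -a ≤ liminf (fun ε => logLaplace (μ ε) h ε) (𝓝[>] 0)) :
    -a ≤ liminf (fun ε : ℝ => (ε : EReal) * ENNReal.log (μ ε U)) (𝓝[>] 0) := by
  rcases eq_top_or_lt_top a with rfl | ha
  · simp
  obtain ⟨M, haM, -⟩ := EReal.exists_between_coe_real ha
  obtain ⟨g, hg, hgx₀, hgM, hgU⟩ :=
    exists_continuous_eq_zero_eqOn_compl hU hx₀ (le_max_right M 0)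
  have hbound : ∀ x, |g x| ≤ max M 0 := fun x =>
    abs_le.2 ⟨by linarith [(hgM x).1, le_max_right M 0], (hgM x).2⟩
  have hlower := (hLP g hg ⟨_, hbound⟩ hgx₀).trans (liminf_logLaplace_le_max hμ hU.measurableSet
    (fun x _ => (hgM x).1) (fun x hx => (hgU hx).ge))
  have hlt : ((-max M 0 : ℝ) : EReal) < -a := by
    rw [EReal.coe_neg, EReal.neg_lt_neg_iff]
    exact haM.trans_le (EReal.coe_le_coe_iff.2 (le_max_left M 0))
  exact (le_max_iff.1 hlower).resolve_right hlt.not_ge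

lemma neg_add_le_liminf_logLaplace_of_forall_isOpen {h : E → ℝ} (hh : Continuous h) {x₀ : E}
    {a : EReal} (hLD : ∀ U : Set E, IsOpen U → x₀ ∈ U →
      -a ≤ liminf (fun ε : ℝ => (ε : EReal) * ENNReal.log (μ ε U)) (𝓝[>] 0)) :
    -((h x₀ : EReal) + a) ≤ liminf (fun ε => logLaplace (μ ε) h ε) (𝓝[>] 0) := by
  have hlim : Tendsto (fun c : ℝ => -((c : EReal) + a)) (𝓝[>] (h x₀))
      (𝓝 (-((h x₀ : EReal) + a))) := by
    refine (ContinuousAt.tendsto ?_).mono_left nhdsWithin_le_nhds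
    exact continuous_neg.continuousAt.comp <|
      (EReal.continuousAt_add (.inl (EReal.coe_ne_top _)) (.inl (EReal.coe_ne_bot _))).comp
        (continuous_coe_real_ereal.prodMk continuous_const).continuousAt
  refine le_of_tendsto hlim (eventually_nhdsWithin_of_forall fun c (hc : h x₀ < c) => ?_)
  have hU : IsOpen {x | h x < c} := isOpen_lt hh continuous_const
  calc -((c : EReal) + a) = ((-c : ℝ) : EReal) + -a := by
        rw [EReal.neg_add (.inl (EReal.coe_ne_bot c)) (.inl (EReal.coe_ne_top c)), sub_eq_add_neg,
          EReal.coe_neg]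
    _ ≤ ((-c : ℝ) : EReal) + liminf (fun ε : ℝ => (ε : EReal) * ENNReal.log (μ ε {x | h x < c}))
          (𝓝[>] 0) := by gcongr; exact hLD _ hU hc
    _ ≤ _ := neg_add_liminf_le_liminf_logLaplace hU.measurableSet fun _ hx => le_of_lt hx

end LogLaplace

theorem stmt_1 {E : Type*} [TopologicalSpace E] [PolishSpace E]
    [MeasurableSpace E] [BorelSpace E]
    (μ : ℝ → Measure E) (hμ : ∀ ε : ℝ, 0 < ε → IsProbabilityMeasure (μ ε))
    (I : E → ℝ≥0∞) :
    (∀ h : E → ℝ, Continuous h → (∃ C : ℝ, ∀ x, |h x| ≤ C) →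
      -(⨅ x : E, ((h x : EReal) + (I x : EReal))) ≤
        Filter.liminf
          (fun ε : ℝ =>
            ((ε * Real.log (∫ x, Real.exp (-(h x) / ε) ∂(μ ε)) : ℝ) : EReal))
          (𝓝[>] (0:ℝ)))
    ↔
    (∀ U : Set E, IsOpen U →
      -(⨅ x ∈ U, (I x : EReal)) ≤
        Filter.liminf (fun ε : ℝ => (ε : EReal) * ENNReal.log (μ ε U)) (𝓝[>] (0:ℝ))) := by
  have hLaplace : ∀ h : E → ℝ, Continuous h → (∃ C : ℝ, ∀ x, |h x| ≤ C) →
      liminf (fun ε : ℝ => ((ε * Real.log (∫ x, Real.exp (-(h x) / ε) ∂(μ ε)) : ℝ) : EReal))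
        (𝓝[>] 0) = liminf (fun ε => logLaplace (μ ε) h ε) (𝓝[>] 0) :=
    fun h hh ⟨C, hC⟩ => liminf_congr <| eventually_nhdsWithin_of_forall fun ε hε =>
      have := hμ ε hε
      coe_mul_log_integral_eq_logLaplace <|
        integrable_exp_neg_div hh.measurable (fun x => (abs_le.1 (hC x)).1) hε.le
  constructor
  · intro hLP U hU
    refine EReal.neg_le.2 (le_iInf₂ fun x₀ hx₀ => EReal.neg_le.1 ?_)
    refine neg_le_liminf_mul_log_measure_of_forall_continuous hμ hU hx₀ fun h hh hC hhx₀ => ?_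
    rw [← hLaplace h hh hC]
    refine le_trans (EReal.neg_le_neg_iff.2 ?_) (hLP h hh hC)
    simpa [hhx₀] using iInf_le (fun x => (h x : EReal) + I x) x₀
  · intro hLD h hh hC
    rw [hLaplace h hh hC]
    refine EReal.neg_le.2 (le_iInf fun x₀ => EReal.neg_le.1 ?_)
    exact neg_add_le_liminf_logLaplace_of_forall_isOpen hh fun U hU hx₀ =>
      (EReal.neg_le_neg_iff.2 (iInf₂_le x₀ hx₀)).trans (hLD U hU)
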